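/- (Donald's identity.) For all positive semidefinite complex matrices ρ, σ, ω of the same finite size and every real number p ∈ [0,1], writing p̄ = 1−p, one has p·D(ρ‖ω) + p̄·D(σ‖ω) = p·D(ρ‖pρ+p̄σ) + p̄·D(σ‖pρ+p̄σ) + D(pρ+p̄σ‖ω), with equality in [0,+∞] under the convention 0·(+∞) = 0. -/

import Mathlib

/-!
When all the range conditions hold, every term of the identity is `ENNReal.ofReal` of the trace
expression `Tr ρ Log ρ − Tr ρ Log σ + Tr σ − Tr ρ`. Apart from `Tr ρ Log ρ` this expression is
affine in `ρ`, so for `τ = pρ + p̄σ` the real identity is a cancellation of the `Tr τ Log τ` terms.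
It passes through `ENNReal.ofReal` because every term is nonnegative (Klein's inequality): in
eigenbases `vᵢ` of `ρ` and `wⱼ` of `σ` the expression is `∑ᵢⱼ |⟨vᵢ, wⱼ⟩|² (λᵢ log λᵢ − λᵢ log μⱼ
+ μⱼ − λᵢ)`, the weights form a doubly stochastic matrix, and each bracket is nonnegative by
`log x ≤ x − 1`. For `0 < p < 1` the ranges of `ρ` and `σ` lie in that of `τ`, and the range of
`τ` lies in that of `ω` exactly when those of `ρ` and `σ` do, so otherwise both sides are `∞`.
-/

open scoped ENNReal ComplexOrder

/-- `Log X`: functional calculus of the real logarithm (with `log 0 = 0`)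
applied to a Hermitian (in particular, positive semidefinite) matrix `X`;
defined as `0` on non-Hermitian matrices. -/
noncomputable def matLog {n : Type*} [Fintype n] [DecidableEq n]
    (X : Matrix n n ℂ) : Matrix n n ℂ :=
  if hX : X.IsHermitian then hX.cfc Real.log else 0

/-- Lindblad's extended quantum relative entropy `D(ρ‖σ)`, with values in `[0,+∞]`:
`D(ρ‖σ) = Tr(ρ·Log ρ) − Tr(ρ·Log σ) + Tr σ − Tr ρ` if `ran ρ ⊆ ran σ`, and `+∞` otherwise. -/
noncomputable def relEnt {n : Type*} [Fintype n] [DecidableEq n]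
    (ρ σ : Matrix n n ℂ) : ℝ≥0∞ :=
  open Classical in
  if LinearMap.range ρ.mulVecLin ≤ LinearMap.range σ.mulVecLin then
    ENNReal.ofReal ((ρ * matLog ρ).trace.re - (ρ * matLog σ).trace.re
      + σ.trace.re - ρ.trace.re)
  else ∞

namespace Matrix

variable {n : Type*} [Fintype n]

theorem IsHermitian.range_mulVecLin_le_of_ker_le {M N : Matrix n n ℂ} (hM : M.IsHermitian)
    (hN : N.IsHermitian) (h : LinearMap.ker N.mulVecLin ≤ LinearMap.ker M.mulVecLin) :
    LinearMap.range M.mulVecLin ≤ LinearMap.range N.mulVecLin := by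
  classical
  rintro _ ⟨x, rfl⟩
  have hmem : WithLp.toLp 2 (M *ᵥ x) ∈ LinearMap.range (toEuclideanLin N) := by
    rw [← hN.eq, toEuclideanLin_conjTranspose_eq_adjoint, ← LinearMap.orthogonal_ker,
      Submodule.mem_orthogonal]
    intro u hu
    have hMu : M *ᵥ u.ofLp = 0 := h (congrArg WithLp.ofLp hu)
    rw [EuclideanSpace.inner_eq_star_dotProduct, WithLp.ofLp_toLp, dotProduct_comm, dotProduct_mulVec, ← hM.eq, ← star_mulVec, hMu,
      star_zero, zero_dotProduct]
  obtain ⟨y, hy⟩ := hmem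
  exact ⟨y.ofLp, congrArg WithLp.ofLp hy⟩

theorem PosSemidef.ker_mulVecLin_le_of_range_le {ρ σ : Matrix n n ℂ} (hρ : ρ.PosSemidef)
    (hσ : σ.IsHermitian) (h : LinearMap.range ρ.mulVecLin ≤ LinearMap.range σ.mulVecLin) :
    LinearMap.ker σ.mulVecLin ≤ LinearMap.ker ρ.mulVecLin := by
  intro x hx
  obtain ⟨y, hy⟩ := h (LinearMap.mem_range_self ρ.mulVecLin x)
  rw [LinearMap.mem_ker, mulVecLin_apply] at hx ⊢
  simp only [mulVecLin_apply] at hy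
  rw [← hρ.dotProduct_mulVec_zero_iff, ← hy, dotProduct_mulVec, ← hσ.eq, ← star_mulVec, hx,
    star_zero, zero_dotProduct]

theorem PosSemidef.ker_mulVecLin_add_le_left {A B : Matrix n n ℂ} (hA : A.PosSemidef)
    (hB : B.PosSemidef) : LinearMap.ker (A + B).mulVecLin ≤ LinearMap.ker A.mulVecLin := by
  intro x hx
  rw [LinearMap.mem_ker, mulVecLin_apply] at hx ⊢
  have hsum : star x ⬝ᵥ A *ᵥ x + star x ⬝ᵥ B *ᵥ x = 0 := by
    rw [← dotProduct_add, ← add_mulVec, hx, dotProduct_zero]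
  rw [← hA.dotProduct_mulVec_zero_iff]
  exact ((add_eq_zero_iff_of_nonneg (hA.dotProduct_mulVec_nonneg x)
    (hB.dotProduct_mulVec_nonneg x)).mp hsum).1

theorem PosSemidef.range_mulVecLin_le_add {A B : Matrix n n ℂ} (hA : A.PosSemidef)
    (hB : B.PosSemidef) : LinearMap.range A.mulVecLin ≤ LinearMap.range (A + B).mulVecLin :=
  hA.1.range_mulVecLin_le_of_ker_le (hA.add hB).1 (hA.ker_mulVecLin_add_le_left hB)

theorem range_mulVecLin_smul {K : Type*} [Field K] {A : Matrix n n K} {c : K} (hc : c ≠ 0) :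
    LinearMap.range (c • A).mulVecLin = LinearMap.range A.mulVecLin := by
  rw [← LinearMap.range_smul A.mulVecLin c hc]
  congr 1
  ext
  simp

theorem PosSemidef.range_mulVecLin_smul_add_le_iff {A B : Matrix n n ℂ} (hA : A.PosSemidef)
    (hB : B.PosSemidef) {a b : ℂ} (ha : 0 < a) (hb : 0 < b) (W : Submodule ℂ (n → ℂ)) :
    LinearMap.range (a • A + b • B).mulVecLin ≤ W ↔
      LinearMap.range A.mulVecLin ≤ W ∧ LinearMap.range B.mulVecLin ≤ W := by
  have haA := hA.smul ha.le
  have hbB := hB.smul hb.le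
  constructor
  · intro h
    refine ⟨?_, ?_⟩
    · rw [← range_mulVecLin_smul ha.ne']
      exact (haA.range_mulVecLin_le_add hbB).trans h
    · rw [← range_mulVecLin_smul hb.ne']
      rw [add_comm] at h
      exact (hbB.range_mulVecLin_le_add haA).trans h
  · rintro ⟨hAW, hBW⟩
    rw [mulVecLin_add]
    refine (LinearMap.range_add_le _ _).trans (sup_le ?_ ?_)
    · rwa [range_mulVecLin_smul ha.ne']
    · rwa [range_mulVecLin_smul hb.ne']

section Spectral

variable [DecidableEq n]

theorem sum_normSq_row_of_mem_unitaryGroup {U : Matrix n n ℂ} (hU : U ∈ unitaryGroup n ℂ)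
    (i : n) : ∑ j, Complex.normSq (U i j) = 1 := by
  have h := congrFun (congrFun (mem_unitaryGroup_iff.mp hU) i) i
  rw [Matrix.mul_apply, one_apply_eq] at h
  simp only [star_apply, Complex.star_def, Complex.mul_conj] at h
  exact_mod_cast h

theorem sum_normSq_col_of_mem_unitaryGroup {U : Matrix n n ℂ} (hU : U ∈ unitaryGroup n ℂ)
    (j : n) : ∑ i, Complex.normSq (U i j) = 1 := by
  simpa [Complex.star_def] using
    sum_normSq_row_of_mem_unitaryGroup (Unitary.star_mem hU) j

variable {A B : Matrix n n ℂ}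

/-- `|⟨vᵢ, wⱼ⟩|²` for the eigenvector bases `v` of `A` and `w` of `B`. -/
noncomputable def IsHermitian.overlap (hA : A.IsHermitian) (hB : B.IsHermitian) (i j : n) : ℝ :=
  Complex.normSq ((star (hA.eigenvectorUnitary : Matrix n n ℂ) * hB.eigenvectorUnitary) i j)

namespace IsHermitian

variable (hA : A.IsHermitian) (hB : B.IsHermitian)

theorem star_eigenvectorUnitary_mul_mem :
    star (hA.eigenvectorUnitary : Matrix n n ℂ) * hB.eigenvectorUnitary ∈ unitaryGroup n ℂ :=
  Submonoid.mul_mem _ (Unitary.star_mem hA.eigenvectorUnitary.2) hB.eigenvectorUnitary.2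

theorem overlap_nonneg (i j : n) : 0 ≤ hA.overlap hB i j :=
  Complex.normSq_nonneg _

theorem sum_overlap_right (i : n) : ∑ j, hA.overlap hB i j = 1 :=
  sum_normSq_row_of_mem_unitaryGroup (star_eigenvectorUnitary_mul_mem hA hB) i

theorem sum_overlap_left (j : n) : ∑ i, hA.overlap hB i j = 1 :=
  sum_normSq_col_of_mem_unitaryGroup (star_eigenvectorUnitary_mul_mem hA hB) j

theorem overlap_self (i j : n) : hA.overlap hA i j = if i = j then 1 else 0 := by
  rw [overlap, Unitary.coe_star_mul_self, one_apply]
  split_ifs <;> simp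

theorem re_trace_mul_cfc (f : ℝ → ℝ) :
    (A * hB.cfc f).trace.re
      = ∑ i, ∑ j, hA.overlap hB i j * (hA.eigenvalues i * f (hB.eigenvalues j)) := by
  set W := star (hA.eigenvectorUnitary : Matrix n n ℂ) * hB.eigenvectorUnitary with hW
  have key : (A * hB.cfc f).trace = (diagonal (RCLike.ofReal ∘ hA.eigenvalues) * W
      * diagonal (RCLike.ofReal ∘ f ∘ hB.eigenvalues) * star W).trace := by
    conv_lhs => rw [hA.spectral_theorem, IsHermitian.cfc, Unitary.conjStarAlgAut_apply,
      Unitary.conjStarAlgAut_apply]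
    rw [hW, star_mul, star_star]
    simp only [Matrix.mul_assoc]
    rw [trace_mul_comm]
    simp only [Matrix.mul_assoc]
  rw [key]
  simp only [trace, diag_apply, Complex.re_sum]
  refine Finset.sum_congr rfl fun i _ => ?_
  rw [Matrix.mul_apply]
  simp only [mul_diagonal, diagonal_mul, star_apply, Complex.re_sum]
  refine Finset.sum_congr rfl fun j _ => ?_
  rw [overlap, ← hW, ← Complex.ofReal_re (_ * _)]
  congr 1
  push_cast
  rw [← Complex.mul_conj]
  simp only [Function.comp_apply, Complex.star_def, RCLike.ofReal_eq_complex_ofReal]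
  ring

theorem re_trace_mul_cfc_self (f : ℝ → ℝ) :
    (A * hA.cfc f).trace.re = ∑ i, hA.eigenvalues i * f (hA.eigenvalues i) := by
  simp [re_trace_mul_cfc hA hA, overlap_self]

theorem re_trace_eq_sum_eigenvalues : A.trace.re = ∑ i, hA.eigenvalues i := by
  simp [hA.trace_eq_sum_eigenvalues]

theorem eigenvalues_mul_overlap_eq_zero {j : n} (hj : A *ᵥ ⇑(hB.eigenvectorBasis j) = 0)
    (i : n) : hA.eigenvalues i * hA.overlap hB i j = 0 := by
  have hdiag : star (hA.eigenvectorUnitary : Matrix n n ℂ) * A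
      = diagonal (RCLike.ofReal ∘ hA.eigenvalues) * star (hA.eigenvectorUnitary : Matrix n n ℂ) := by
    rw [← hA.conjStarAlgAut_star_eigenvectorUnitary, Unitary.conjStarAlgAut_star_apply,
      Matrix.mul_assoc _ (hA.eigenvectorUnitary : Matrix n n ℂ),
      Unitary.mul_star_self_of_mem hA.eigenvectorUnitary.2, Matrix.mul_one]
  have hentry : (diagonal (RCLike.ofReal ∘ hA.eigenvalues)
      * star (hA.eigenvectorUnitary : Matrix n n ℂ) * (hB.eigenvectorUnitary : Matrix n n ℂ)
      : Matrix n n ℂ) i j = 0 := by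
    have hcol := congrFun (mulVec_single_one (star (hA.eigenvectorUnitary : Matrix n n ℂ) * A
      * (hB.eigenvectorUnitary : Matrix n n ℂ)) j) i
    rw [← mulVec_mulVec, eigenvectorUnitary_mulVec, ← mulVec_mulVec, hj, mulVec_zero] at hcol
    rw [← hdiag]
    simpa using hcol.symm
  rw [Matrix.mul_assoc, diagonal_mul, Function.comp_apply] at hentry
  rcases mul_eq_zero.mp hentry with h | h
  · simp [RCLike.ofReal_eq_zero.mp h]
  · simp [overlap, h]

end IsHermitian
end Spectral

end Matrix

theorem Real.mul_log_sub_mul_log_add_sub_nonneg {a b : ℝ} (ha : 0 ≤ a) (hb : 0 < b) :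
    0 ≤ a * Real.log a - a * Real.log b + b - a := by
  rcases ha.eq_or_lt with rfl | ha
  · simpa using hb.le
  have h := mul_le_mul_of_nonneg_left (Real.log_le_sub_one_of_pos (div_pos hb ha)) ha.le
  rw [Real.log_div hb.ne' ha.ne', mul_sub, mul_sub, mul_div_cancel₀ _ ha.ne'] at h
  linarith

theorem ENNReal.ofReal_mul_add_ofReal_mul {a b x y : ℝ} (ha : 0 ≤ a) (hb : 0 ≤ b) (hx : 0 ≤ x)
    (hy : 0 ≤ y) :
    ENNReal.ofReal a * ENNReal.ofReal x + ENNReal.ofReal b * ENNReal.ofReal y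
      = ENNReal.ofReal (a * x + b * y) := by
  rw [← ENNReal.ofReal_mul ha, ← ENNReal.ofReal_mul hb,
    ENNReal.ofReal_add (mul_nonneg ha hx) (mul_nonneg hb hy)]

section RelEnt

open Matrix

variable {n : Type*} [Fintype n] [DecidableEq n]

noncomputable def relEntFormula (ρ σ : Matrix n n ℂ) : ℝ :=
  (ρ * matLog ρ).trace.re - (ρ * matLog σ).trace.re + σ.trace.re - ρ.trace.re

theorem matLog_of_isHermitian {X : Matrix n n ℂ} (hX : X.IsHermitian) :
    matLog X = hX.cfc Real.log :=
  dif_pos hX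

theorem relEnt_of_range_le {ρ σ : Matrix n n ℂ}
    (h : LinearMap.range ρ.mulVecLin ≤ LinearMap.range σ.mulVecLin) :
    relEnt ρ σ = ENNReal.ofReal (relEntFormula ρ σ) :=
  if_pos h

theorem relEnt_of_not_range_le {ρ σ : Matrix n n ℂ}
    (h : ¬ LinearMap.range ρ.mulVecLin ≤ LinearMap.range σ.mulVecLin) : relEnt ρ σ = ∞ :=
  if_neg h

theorem relEnt_self (σ : Matrix n n ℂ) : relEnt σ σ = 0 := by
  simp [relEnt_of_range_le le_rfl, relEntFormula]

theorem relEntFormula_eq_sum {ρ σ : Matrix n n ℂ} (hρ : ρ.IsHermitian) (hσ : σ.IsHermitian) :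
    relEntFormula ρ σ = ∑ i, ∑ j, hρ.overlap hσ i j *
      (hρ.eigenvalues i * Real.log (hρ.eigenvalues i)
        - hρ.eigenvalues i * Real.log (hσ.eigenvalues j) + hσ.eigenvalues j - hρ.eigenvalues i) := by
  have hρρ : ∑ i, ∑ j, hρ.overlap hσ i j * (hρ.eigenvalues i * Real.log (hρ.eigenvalues i))
      = ∑ i, hρ.eigenvalues i * Real.log (hρ.eigenvalues i) := by
    simp_rw [← Finset.sum_mul, hρ.sum_overlap_right hσ, one_mul]
  have hρ1 : ∑ i, ∑ j, hρ.overlap hσ i j * hρ.eigenvalues i = ∑ i, hρ.eigenvalues i := by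
    simp_rw [← Finset.sum_mul, hρ.sum_overlap_right hσ, one_mul]
  have hσ1 : ∑ i, ∑ j, hρ.overlap hσ i j * hσ.eigenvalues j = ∑ j, hσ.eigenvalues j := by
    rw [Finset.sum_comm]
    simp_rw [← Finset.sum_mul, hρ.sum_overlap_left hσ, one_mul]
  simp only [mul_add, mul_sub, Finset.sum_add_distrib, Finset.sum_sub_distrib, hρρ, hρ1, hσ1]
  rw [relEntFormula, matLog_of_isHermitian hρ, matLog_of_isHermitian hσ,
    hρ.re_trace_mul_cfc_self, hρ.re_trace_mul_cfc hσ, hσ.re_trace_eq_sum_eigenvalues,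
    hρ.re_trace_eq_sum_eigenvalues]

theorem relEntFormula_nonneg {ρ σ : Matrix n n ℂ} (hρ : ρ.PosSemidef) (hσ : σ.PosSemidef)
    (h : LinearMap.range ρ.mulVecLin ≤ LinearMap.range σ.mulVecLin) :
    0 ≤ relEntFormula ρ σ := by
  rw [relEntFormula_eq_sum hρ.1 hσ.1]
  refine Finset.sum_nonneg fun i _ => Finset.sum_nonneg fun j _ => ?_
  have hlam := hρ.eigenvalues_nonneg i
  rcases (hσ.eigenvalues_nonneg j).eq_or_lt with hμ | hμ
  · -- `ker σ ⊆ ker ρ` makes the weight `λᵢ |⟨vᵢ, wⱼ⟩|²` of a zero eigenvalue `μⱼ` vanish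
    have hker : σ *ᵥ ⇑(hσ.1.eigenvectorBasis j) = 0 := by
      rw [hσ.1.mulVec_eigenvectorBasis, ← hμ, zero_smul]
    rcases mul_eq_zero.mp (hρ.1.eigenvalues_mul_overlap_eq_zero hσ.1
      (hρ.ker_mulVecLin_le_of_range_le hσ.1 h hker) i) with h0 | h0
    · simp [h0, ← hμ]
    · simp [h0]
  · exact mul_nonneg (hρ.1.overlap_nonneg hσ.1 i j)
      (Real.mul_log_sub_mul_log_add_sub_nonneg hlam hμ)

theorem relEntFormula_donald_identity (ρ σ ω : Matrix n n ℂ) {a b : ℝ} (hab : a + b = 1) :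
    a * relEntFormula ρ ω + b * relEntFormula σ ω
      = a * relEntFormula ρ ((a : ℂ) • ρ + (b : ℂ) • σ)
        + b * relEntFormula σ ((a : ℂ) • ρ + (b : ℂ) • σ)
        + relEntFormula ((a : ℂ) • ρ + (b : ℂ) • σ) ω := by
  have hmul (M : Matrix n n ℂ) : (((a : ℂ) • ρ + (b : ℂ) • σ) * M).trace.re
      = a * (ρ * M).trace.re + b * (σ * M).trace.re := by
    simp [Matrix.add_mul, trace_add, trace_smul, Complex.mul_re]
  have htr : ((a : ℂ) • ρ + (b : ℂ) • σ).trace.re = a * ρ.trace.re + b * σ.trace.re := by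
    simp [trace_add, trace_smul, Complex.mul_re]
  simp only [relEntFormula, hmul, htr]
  linear_combination (ω.trace.re - a * ρ.trace.re - b * σ.trace.re) * hab

end RelEnt

/-- Donald's identity: for `p ∈ [0,1]` and `p̄ = 1−p`,
`p·D(ρ‖ω) + p̄·D(σ‖ω) = p·D(ρ‖pρ+p̄σ) + p̄·D(σ‖pρ+p̄σ) + D(pρ+p̄σ‖ω)`
in `[0,+∞]` (with the convention `0·(+∞) = 0`, as holds in `ℝ≥0∞`). -/
theorem relEnt_donald_identity {n : Type*} [Fintype n] [DecidableEq n]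
    (ρ σ ω : Matrix n n ℂ)
    (hρ : ρ.PosSemidef) (hσ : σ.PosSemidef) (hω : ω.PosSemidef)
    (p : ℝ) (hp0 : 0 ≤ p) (hp1 : p ≤ 1) :
    ENNReal.ofReal p * relEnt ρ ω + ENNReal.ofReal (1 - p) * relEnt σ ω
      = ENNReal.ofReal p * relEnt ρ ((p : ℂ) • ρ + ((1 - p : ℝ) : ℂ) • σ)
        + ENNReal.ofReal (1 - p) * relEnt σ ((p : ℂ) • ρ + ((1 - p : ℝ) : ℂ) • σ)
        + relEnt ((p : ℂ) • ρ + ((1 - p : ℝ) : ℂ) • σ) ω := by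
  rcases hp0.eq_or_lt with rfl | hp0
  · simp [relEnt_self]
  rcases hp1.eq_or_lt with rfl | hp1
  · simp [relEnt_self]
  have hq : 0 < 1 - p := sub_pos.mpr hp1
  have hrange := hρ.range_mulVecLin_smul_add_le_iff hσ (Complex.zero_lt_real.mpr hp0)
    (Complex.zero_lt_real.mpr hq)
  obtain ⟨hρτ, hστ⟩ := (hrange _).mp le_rfl
  by_cases hfin : LinearMap.range ρ.mulVecLin ≤ LinearMap.range ω.mulVecLin ∧
      LinearMap.range σ.mulVecLin ≤ LinearMap.range ω.mulVecLin
  · have hτω := (hrange _).mpr hfin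
    have hτ := (hρ.smul (Complex.zero_le_real.mpr hp0.le)).add
      (hσ.smul (Complex.zero_le_real.mpr hq.le))
    have hDρτ := relEntFormula_nonneg hρ hτ hρτ
    have hDστ := relEntFormula_nonneg hσ hτ hστ
    rw [relEnt_of_range_le hfin.1, relEnt_of_range_le hfin.2, relEnt_of_range_le hρτ,
      relEnt_of_range_le hστ, relEnt_of_range_le hτω,
      ENNReal.ofReal_mul_add_ofReal_mul hp0.le hq.le (relEntFormula_nonneg hρ hω hfin.1)
        (relEntFormula_nonneg hσ hω hfin.2),
      ENNReal.ofReal_mul_add_ofReal_mul hp0.le hq.le hDρτ hDστ,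
      ← ENNReal.ofReal_add (add_nonneg (mul_nonneg hp0.le hDρτ) (mul_nonneg hq.le hDστ))
        (relEntFormula_nonneg hτ hω hτω),
      relEntFormula_donald_identity ρ σ ω (add_sub_cancel p 1)]
  · rw [relEnt_of_not_range_le (mt (hrange _).mp hfin), add_top]
    rcases not_and_or.mp hfin with h | h
    · rw [relEnt_of_not_range_le h, ENNReal.mul_top (ENNReal.ofReal_pos.mpr hp0).ne', top_add]
    · rw [relEnt_of_not_range_le h, ENNReal.mul_top (ENNReal.ofReal_pos.mpr hq).ne', add_top]
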